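/- For every integer n ≥ 1, Z_n ≤ 3/(2·sqrt(2)) · 1/sqrt(n), where Z_n := (1/n!) · Σ_{σ ∈ S_n} 2^{-c(σ)}. -/

import Mathlib

open scoped BigOperators

/-- `Z_n = (1/n!) · Σ_{σ ∈ S_n} 2^{-c(σ)}`, where `c(σ)` is the number of cycles of `σ`
of length greater than one (the cardinality of the cycle type of `σ`). -/
noncomputable def Zseq (n : ℕ) : ℝ :=
  (Nat.factorial n : ℝ)⁻¹ *
    ∑ σ : Equiv.Perm (Fin n), ((2 : ℝ) ^ σ.cycleType.card)⁻¹

section ZseqProof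

open Equiv Equiv.Perm Finset

set_option linter.unusedSectionVars false

namespace ZseqAux


variable {α : Type*} [DecidableEq α] [Fintype α]

lemma merge_support {c : Perm α} {a b : α} (ha : c a = a) (hb : c b ≠ b)
    (hab : a ≠ b) {z : α} : (swap a b * c) z ≠ z ↔ (z = a ∨ c z ≠ z) := by
  have hca : ∀ y, c y = a → y = a := fun y h => c.injective (h.trans ha.symm)
  rcases eq_or_ne z a with rfl | hza
  · simp [mul_apply, ha, swap_apply_left, hab.symm]
  · rcases eq_or_ne (c z) z with hcz | hcz
    · have hzb : z ≠ b := fun h => hb (by subst h; exact hcz)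
      simp [mul_apply, hcz, swap_apply_of_ne_of_ne hza hzb, hza]
    · rcases eq_or_ne (c z) b with hczb | hczb
      · have hbz : ¬b = z := fun hbz => hcz (hczb.trans hbz)
        simp [mul_apply, hczb, swap_apply_right, hza, hcz, Ne.symm hza, hbz]
      · have h1 : c z ≠ a := fun h => hza (hca _ h)
        simp [mul_apply, swap_apply_of_ne_of_ne h1 hczb, hcz, hza]

lemma merge_isCycle {c : Perm α} {a b : α} (hc : IsCycle c) (ha : c a = a)
    (hb : c b ≠ b) (hab : a ≠ b) : IsCycle (swap a b * c) := by
  have hfa : (swap a b * c) a = b := by simp [mul_apply, ha]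
  refine ⟨a, by simp [hfa, hab.symm, Ne.symm hab], ?_⟩
  intro y hy
  rcases eq_or_ne y a with rfl | hya
  · exact SameCycle.refl _ _
  have hcy : c y ≠ y := ((merge_support ha hb hab).1 hy).resolve_left hya
  obtain ⟨i, hi⟩ := hc.exists_pow_eq hb hcy
  have key : ∀ i : ℕ, ∃ j : ℕ, ((swap a b * c) ^ j) a = (c ^ i) b := by
    intro i
    induction i with
    | zero => exact ⟨1, by simpa [pow_one] using hfa⟩
    | succ i ih =>
      obtain ⟨j, hj⟩ := ih
      rcases eq_or_ne ((c ^ (i + 1)) b) b with hcb | hcb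
      · exact ⟨1, by rw [hcb]; simpa [pow_one] using hfa⟩
      · refine ⟨j + 1, ?_⟩
        have hmemsupp : (c ^ (i + 1)) b ∈ c.support := by
          rw [pow_apply_mem_support, mem_support]; exact hb
        have hne_a : (c ^ (i + 1)) b ≠ a := by
          intro h
          rw [h, mem_support] at hmemsupp; exact hmemsupp ha
        have hstep : c ((c ^ i) b) = (c ^ (i + 1)) b := by
          rw [pow_succ', mul_apply]
        rw [pow_succ', mul_apply, hj, mul_apply, hstep,
          swap_apply_of_ne_of_ne hne_a hcb]
  obtain ⟨j, hj⟩ := key i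
  rw [hi] at hj
  exact ⟨j, by rw [zpow_natCast]; exact hj⟩

lemma card_cycleType_swap_mul_eq {τ : Perm α} {a b : α}
    (ha : τ a = a) (hb : τ b ≠ b) (hab : a ≠ b) :
    (swap a b * τ).cycleType.card = τ.cycleType.card := by
  classical
  set c := τ.cycleOf b with hc_def
  have hc : IsCycle c := isCycle_cycleOf τ hb
  have hcb : c b ≠ b := by rw [hc_def, cycleOf_apply_self]; exact hb
  have hmem : c ∈ τ.cycleFactorsFinset := cycleOf_mem_cycleFactorsFinset_iff.2 (mem_support.2 hb)
  have hanotsupτ : a ∉ τ.support := by rw [mem_support]; exact fun h => h ha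
  have hanotsup : a ∉ c.support := fun h => hanotsupτ (support_cycleOf_le τ b h)
  have hca : c a = a := by rwa [← notMem_support]
  set ρ := τ * c⁻¹ with hρ_def
  have hd : Perm.Disjoint ρ c := disjoint_mul_inv_of_mem_cycleFactorsFinset hmem
  have hρc : ρ * c = τ := inv_mul_cancel_right τ c
  have hρa : ρ a = a := by
    have h1 : c⁻¹ a = a := by rw [inv_eq_iff_eq, hca]
    rw [hρ_def, mul_apply, h1, ha]
  have hρb : ρ b = b := by
    rcases hd b with h | h
    · exact h
    · exact absurd h hcb
  have hcomm : swap a b * ρ = ρ * swap a b := by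
    have hd2 : Perm.Disjoint (swap a b) ρ := by
      intro x
      rcases eq_or_ne x a with rfl | hxa
      · exact Or.inr hρa
      rcases eq_or_ne x b with rfl | hxb
      · exact Or.inr hρb
      · exact Or.inl (swap_apply_of_ne_of_ne hxa hxb)
    exact hd2.commute.eq
  have hsplit : swap a b * τ = ρ * (swap a b * c) := by
    rw [← hρc, ← mul_assoc, hcomm, mul_assoc]
  have hd3 : Perm.Disjoint ρ (swap a b * c) := by
    intro x
    by_cases hx : (swap a b * c) x = x
    · exact Or.inr hx
    · rcases (merge_support hca hcb hab).1 hx with rfl | hcx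
      · exact Or.inl hρa
      · rcases hd x with h | h
        · exact Or.inl h
        · exact absurd h hcx
  have hcyc' : IsCycle (swap a b * c) := merge_isCycle hc hca hcb hab
  have h1 : (swap a b * τ).cycleType = ρ.cycleType + (swap a b * c).cycleType := by
    rw [hsplit, Perm.Disjoint.cycleType_mul hd3]
  have hρct : ρ.cycleType = τ.cycleType - c.cycleType :=
    cycleType_mul_inv_mem_cycleFactorsFinset_eq_sub hmem
  have hle : c.cycleType ≤ τ.cycleType := cycleType_le_of_mem_cycleFactorsFinset hmem
  have hccard : c.cycleType.card = 1 := card_cycleType_eq_one.2 hc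
  have hc'card : (swap a b * c).cycleType.card = 1 := card_cycleType_eq_one.2 hcyc'
  have hτpos : 0 < τ.cycleType.card := by
    rw [card_cycleType_pos]
    exact fun h => hb (by rw [h]; rfl)
  rw [h1, Multiset.card_add, hρct, Multiset.card_sub hle, hccard, hc'card]
  omega

lemma cycleType_swap_mul_disjoint {τ : Perm α} {a b : α}
    (ha : τ a = a) (hb : τ b = b) (hab : a ≠ b) :
    (swap a b * τ).cycleType = 2 ::ₘ τ.cycleType := by
  have hd : Perm.Disjoint (swap a b) τ := by
    intro x
    rcases eq_or_ne x a with rfl | hxa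
    · exact Or.inr ha
    rcases eq_or_ne x b with rfl | hxb
    · exact Or.inr hb
    · exact Or.inl (swap_apply_of_ne_of_ne hxa hxb)
  rw [Perm.Disjoint.cycleType_mul hd]
  have h2 : (swap a b).cycleType = {2} := by
    rw [(isCycle_swap hab).cycleType, support_swap hab]
    simp [Finset.card_insert_of_notMem, hab]
  rw [h2, ← Multiset.singleton_add]

noncomputable def w {β : Type*} [Fintype β] [DecidableEq β] (σ : Perm β) : ℝ :=
  ((2 : ℝ) ^ σ.cycleType.card)⁻¹

lemma w_nonneg {β : Type*} [Fintype β] [DecidableEq β] (σ : Perm β) : 0 ≤ w σ := by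
  rw [w]; positivity

noncomputable def S (n : ℕ) : ℝ := ∑ σ : Perm (Fin n), w σ

def succEquiv (n : ℕ) : Fin n ≃ {x : Fin (n + 1) // x ≠ 0} where
  toFun x := ⟨x.succ, x.succ_ne_zero⟩
  invFun x := x.1.pred x.2
  left_inv x := by simp
  right_inv x := by simp

lemma decomposeFin_zero_eq {n : ℕ} (e : Perm (Fin n)) :
    Equiv.Perm.decomposeFin.symm (0, e) = e.extendDomain (succEquiv n) := by
  apply Equiv.ext; intro x
  refine Fin.cases ?_ ?_ x
  · rw [Equiv.Perm.decomposeFin_symm_apply_zero,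
      Perm.extendDomain_apply_not_subtype _ _ (by simp)]
  · intro i
    have h1 : (e.extendDomain (succEquiv n)) i.succ = (e i).succ := by
      have h2 := Perm.extendDomain_apply_image (e := e) (f := succEquiv n) i
      simpa [succEquiv] using h2
    rw [Equiv.Perm.decomposeFin_symm_apply_succ, h1]
    simp

lemma cycleType_decomposeFin_zero {n : ℕ} (e : Perm (Fin n)) :
    (Equiv.Perm.decomposeFin.symm (0, e)).cycleType = e.cycleType := by
  rw [decomposeFin_zero_eq, cycleType_extendDomain]

lemma w_decomposeFin_zero {n : ℕ} (e : Perm (Fin n)) :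
    w (Equiv.Perm.decomposeFin.symm (0, e)) = w e := by
  rw [w, cycleType_decomposeFin_zero, w]

lemma decomposeFin_succ_eq {n : ℕ} (p : Fin (n + 1)) (e : Perm (Fin n)) :
    Equiv.Perm.decomposeFin.symm (p, e) =
      swap 0 p * Equiv.Perm.decomposeFin.symm (0, e) := by
  apply Equiv.ext; intro x
  refine Fin.cases ?_ ?_ x
  · rw [Equiv.Perm.decomposeFin_symm_apply_zero, mul_apply,
      Equiv.Perm.decomposeFin_symm_apply_zero, swap_apply_left]
  · intro i
    rw [Equiv.Perm.decomposeFin_symm_apply_succ, mul_apply,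
      Equiv.Perm.decomposeFin_symm_apply_succ]
    simp

lemma w_decomposeFin_succ {n : ℕ} (q : Fin n) (e : Perm (Fin n)) :
    w (Equiv.Perm.decomposeFin.symm (q.succ, e)) =
      if e q = q then w e / 2 else w e := by
  set E := Equiv.Perm.decomposeFin.symm ((0 : Fin (n + 1)), e) with hE
  have hE0 : E 0 = 0 := Equiv.Perm.decomposeFin_symm_apply_zero 0 e
  have hEsucc : ∀ i : Fin n, E i.succ = (e i).succ := by
    intro i; rw [hE, Equiv.Perm.decomposeFin_symm_apply_succ]; simp
  rw [decomposeFin_succ_eq]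
  by_cases hq : e q = q
  · rw [if_pos hq]
    have hEq : E q.succ = q.succ := by rw [hEsucc, hq]
    have hct := cycleType_swap_mul_disjoint hE0 hEq (Fin.succ_ne_zero q).symm
    rw [w, hct, Multiset.card_cons, cycleType_decomposeFin_zero, w, pow_succ, mul_inv]
    ring
  · rw [if_neg hq]
    have hEq : E q.succ ≠ q.succ := by
      rw [hEsucc]; exact fun h => hq (Fin.succ_injective _ h)
    have hcard := card_cycleType_swap_mul_eq hE0 hEq (Fin.succ_ne_zero q).symm
    rw [w, hcard, cycleType_decomposeFin_zero, w]

lemma fix_sum (m : ℕ) (q : Fin (m + 1)) :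
    ∑ e : Perm (Fin (m + 1)), (if e q = q then w e else 0) = S m := by
  have step1 : ∑ e : Perm (Fin (m + 1)), (if e q = q then w e else 0)
      = ∑ e : Perm (Fin (m + 1)), (if e 0 = 0 then w e else 0) := by
    set s := swap (0 : Fin (m + 1)) q with hs
    refine Fintype.sum_bijective (fun e => s * e * s⁻¹)
      ((Group.mulRight_bijective s⁻¹).comp (Group.mulLeft_bijective s)) _ _ ?_
    intro e
    have hcond : (s * e * s⁻¹) 0 = 0 ↔ e q = q := by
      rw [mul_apply, mul_apply, hs, swap_inv, swap_apply_left]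
      rw [Equiv.apply_eq_iff_eq_symm_apply]
      simp [swap_apply_left]
    have hw : w (s * e * s⁻¹) = w e := by rw [w, cycleType_conj, ← w]
    by_cases h : e q = q
    · rw [if_pos h, if_pos (hcond.2 h), hw]
    · rw [if_neg h, if_neg (fun hh => h (hcond.1 hh))]
  rw [step1]
  have step2 : ∑ e : Perm (Fin (m + 1)), (if e 0 = 0 then w e else 0)
      = ∑ pe : Fin (m + 1) × Perm (Fin m),
          (if (Equiv.Perm.decomposeFin.symm pe) 0 = 0 then
            w (Equiv.Perm.decomposeFin.symm pe) else 0) := by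
    exact (Fintype.sum_equiv Equiv.Perm.decomposeFin.symm _ _ (fun pe => rfl)).symm
  rw [step2, Fintype.sum_prod_type]
  have step3 : ∀ p : Fin (m + 1), ∑ e : Perm (Fin m),
      (if (Equiv.Perm.decomposeFin.symm (p, e)) 0 = 0 then
        w (Equiv.Perm.decomposeFin.symm (p, e)) else 0)
      = if p = 0 then S m else 0 := by
    intro p
    by_cases hp : p = 0
    · subst hp
      rw [if_pos rfl, S]
      refine Finset.sum_congr rfl fun e _ => ?_
      rw [if_pos (Equiv.Perm.decomposeFin_symm_apply_zero 0 e), w_decomposeFin_zero]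
    · rw [if_neg hp]
      refine Finset.sum_eq_zero fun e _ => ?_
      rw [if_neg]
      rw [Equiv.Perm.decomposeFin_symm_apply_zero]
      exact hp
  rw [Finset.sum_congr rfl (fun p _ => step3 p)]
  simp

lemma S_rec (m : ℕ) :
    S (m + 2) = (m + 2) * S (m + 1) - (m + 1) / 2 * S m := by
  have h0 : S (m + 2) = ∑ pe : Fin (m + 2) × Perm (Fin (m + 1)),
      w (Equiv.Perm.decomposeFin.symm pe) := by
    rw [S]
    exact Fintype.sum_equiv Equiv.Perm.decomposeFin _ _
      (fun σ => by rw [Equiv.symm_apply_apply])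
  rw [h0, Fintype.sum_prod_type, Fin.sum_univ_succ]
  have h1 : ∑ e : Perm (Fin (m + 1)), w (Equiv.Perm.decomposeFin.symm (0, e))
      = S (m + 1) := by
    rw [S]; exact Finset.sum_congr rfl fun e _ => w_decomposeFin_zero e
  have h2 : ∀ q : Fin (m + 1),
      ∑ e : Perm (Fin (m + 1)), w (Equiv.Perm.decomposeFin.symm (q.succ, e))
        = S (m + 1) - 1 / 2 * S m := by
    intro q
    have : ∀ e : Perm (Fin (m + 1)),
        w (Equiv.Perm.decomposeFin.symm (q.succ, e))
          = w e - 1 / 2 * (if e q = q then w e else 0) := by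
      intro e
      rw [w_decomposeFin_succ]
      by_cases h : e q = q
      · rw [if_pos h, if_pos h]; ring
      · rw [if_neg h, if_neg h]; ring
    rw [Finset.sum_congr rfl (fun e _ => this e), Finset.sum_sub_distrib,
      ← Finset.mul_sum, fix_sum]
    simp only [S]
  rw [h1, Finset.sum_congr rfl (fun q _ => h2 q), Finset.sum_const, Finset.card_univ,
    Fintype.card_fin, nsmul_eq_mul]
  push_cast
  ring

lemma S_zero : S 0 = 1 := by
  have huniq : ∀ σ : Perm (Fin 0), σ = 1 := fun σ => Equiv.ext fun x => x.elim0
  have huniv : (Finset.univ : Finset (Perm (Fin 0))) = {1} :=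
    Finset.eq_singleton_iff_unique_mem.2 ⟨Finset.mem_univ 1, fun σ _ => huniq σ⟩
  rw [S, huniv, Finset.sum_singleton]
  simp [w, cycleType_one]

lemma S_one : S 1 = 1 := by
  have huniq : ∀ σ : Perm (Fin 1), σ = 1 := fun σ =>
    Equiv.ext fun x => Subsingleton.elim _ _
  have huniv : (Finset.univ : Finset (Perm (Fin 1))) = {1} :=
    Finset.eq_singleton_iff_unique_mem.2 ⟨Finset.mem_univ 1, fun σ _ => huniq σ⟩
  rw [S, huniv, Finset.sum_singleton]
  simp [w, cycleType_one]

lemma Zrel (n : ℕ) : Zseq n = (Nat.factorial n : ℝ)⁻¹ * S n := rfl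

lemma S_nonneg (n : ℕ) : 0 ≤ S n := Finset.sum_nonneg fun σ _ => w_nonneg σ

lemma Zseq_nonneg (n : ℕ) : 0 ≤ Zseq n := by
  rw [Zrel]
  exact mul_nonneg (by positivity) (S_nonneg n)

lemma Zseq_zero : Zseq 0 = 1 := by rw [Zrel, S_zero]; norm_num

lemma Zseq_one : Zseq 1 = 1 := by rw [Zrel, S_one]; norm_num

lemma Zseq_rec (m : ℕ) :
    Zseq (m + 2) = Zseq (m + 1) - Zseq m / (2 * ((m : ℝ) + 2)) := by
  have hf0 : ((Nat.factorial m : ℕ) : ℝ) ≠ 0 := by positivity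
  have hfac1 : ((Nat.factorial (m + 1) : ℕ) : ℝ) = ((m : ℝ) + 1) * Nat.factorial m := by
    rw [Nat.factorial_succ]; push_cast; ring
  have hfac2 : ((Nat.factorial (m + 2) : ℕ) : ℝ)
      = ((m : ℝ) + 2) * (((m : ℝ) + 1) * Nat.factorial m) := by
    rw [Nat.factorial_succ, ← hfac1]; push_cast [hfac1]; ring
  have hS1 : S (m + 1) = ((Nat.factorial (m + 1) : ℕ) : ℝ) * Zseq (m + 1) := by
    rw [Zrel]
    field_simp
  have hSm : S m = ((Nat.factorial m : ℕ) : ℝ) * Zseq m := by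
    rw [Zrel]; field_simp
  rw [Zrel, S_rec, hS1, hSm, hfac2, hfac1]
  have hm1 : ((m : ℝ) + 1) ≠ 0 := by positivity
  have hm2 : ((m : ℝ) + 2) ≠ 0 := by positivity
  field_simp

lemma Zseq_two : Zseq 2 = 3 / 4 := by
  have h := Zseq_rec 0
  rw [Zseq_zero, Zseq_one] at h
  norm_num at h
  exact h

lemma Zseq_three : Zseq 3 = 7 / 12 := by
  have h := Zseq_rec 1
  rw [Zseq_two, Zseq_one] at h
  norm_num at h
  exact h

lemma Zseq_four : Zseq 4 = 47 / 96 := by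
  have h := Zseq_rec 2
  rw [Zseq_three, Zseq_two] at h
  norm_num at h
  exact h

lemma Zseq_five : Zseq 5 = 69 / 160 := by
  have h := Zseq_rec 3
  rw [Zseq_four, Zseq_three] at h
  norm_num at h
  exact h

lemma Zseq_antitone (m : ℕ) : Zseq (m + 1) ≤ Zseq m := by
  cases m with
  | zero => rw [Zseq_zero, Zseq_one]
  | succ k =>
    rw [Zseq_rec k]
    have h1 : 0 ≤ Zseq k / (2 * ((k : ℝ) + 2)) := by
      apply div_nonneg (Zseq_nonneg k); positivity
    linarith

lemma Zseq_ratio (m : ℕ) :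
    Zseq (m + 2) * (2 * (m : ℝ) + 5) ≤ Zseq (m + 1) * (2 * (m : ℝ) + 4) := by
  have h := Zseq_rec m
  have hpos : (0 : ℝ) < 2 * ((m : ℝ) + 2) := by positivity
  have heq' : Zseq (m + 2) * (2 * ((m : ℝ) + 2))
      = Zseq (m + 1) * (2 * ((m : ℝ) + 2)) - Zseq m := by
    rw [h]; field_simp
  have hmono : Zseq (m + 2) ≤ Zseq m :=
    le_trans (Zseq_antitone (m + 1)) (Zseq_antitone m)
  nlinarith [heq', hmono]

lemma sqle {a b u v : ℝ} (ha : 0 ≤ a) (hb : 0 ≤ b) (h : a ^ 2 * u ≤ b ^ 2 * v) :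
    a * Real.sqrt u ≤ b * Real.sqrt v := by
  have h1 : a * Real.sqrt u = Real.sqrt (a ^ 2 * u) := by
    rw [Real.sqrt_mul (sq_nonneg a), Real.sqrt_sq ha]
  have h2 : b * Real.sqrt v = Real.sqrt (b ^ 2 * v) := by
    rw [Real.sqrt_mul (sq_nonneg b), Real.sqrt_sq hb]
  rw [h1, h2]; exact Real.sqrt_le_sqrt h

lemma Astep (m : ℕ) :
    Zseq (m + 2) * Real.sqrt ((m : ℝ) + 3) ≤ Zseq (m + 1) * Real.sqrt ((m : ℝ) + 2) := by
  have hr := Zseq_ratio m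
  have key : (2 * (m : ℝ) + 4) * Real.sqrt ((m : ℝ) + 3)
      ≤ (2 * (m : ℝ) + 5) * Real.sqrt ((m : ℝ) + 2) := by
    apply sqle (by positivity) (by positivity)
    nlinarith [sq_nonneg ((m : ℝ))]
  have hpos : (0 : ℝ) < 2 * (m : ℝ) + 5 := by positivity
  rw [← mul_le_mul_iff_of_pos_right hpos]
  have h1 := mul_le_mul_of_nonneg_right hr (Real.sqrt_nonneg ((m : ℝ) + 3))
  have h2 := mul_le_mul_of_nonneg_left key (Zseq_nonneg (m + 1))
  nlinarith [h1, h2]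

lemma A5 (k : ℕ) : Zseq (k + 5) * Real.sqrt ((k : ℝ) + 6) ≤ Zseq 5 * Real.sqrt 6 := by
  induction k with
  | zero => norm_num
  | succ k ih =>
    have step := Astep (k + 4)
    have e1 : k + 4 + 2 = k + 1 + 5 := by omega
    have e2 : k + 4 + 1 = k + 5 := by omega
    rw [e1, e2] at step
    have e3 : ((k + 4 : ℕ) : ℝ) + 3 = ((k + 1 : ℕ) : ℝ) + 6 := by push_cast; ring
    have e4 : ((k + 4 : ℕ) : ℝ) + 2 = (k : ℝ) + 6 := by push_cast; ring
    rw [e3, e4] at step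
    exact le_trans step ih

end ZseqAux

end ZseqProof

open ZseqAux in
/-- for every `n ≥ 1`, `Z_n ≤ 3/(2·sqrt 2) · 1/sqrt n`. -/
theorem Zseq_upper_bound (n : ℕ) (hn : 1 ≤ n) :
    Zseq n ≤ 3 / (2 * Real.sqrt 2) * (1 / Real.sqrt n) := by
  have hC : 3 / (2 * Real.sqrt 2) = 3 / 4 * Real.sqrt 2 := by
    have h2 : Real.sqrt 2 * Real.sqrt 2 = 2 := Real.mul_self_sqrt (by norm_num)
    have hs2 : (0 : ℝ) < Real.sqrt 2 := Real.sqrt_pos.2 (by norm_num)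
    rw [div_eq_iff (by positivity : (2 : ℝ) * Real.sqrt 2 ≠ 0)]
    nlinarith [h2]
  have hnR : (0 : ℝ) < (n : ℝ) := by exact_mod_cast Nat.lt_of_lt_of_le Nat.zero_lt_one hn
  have hsn : (0 : ℝ) < Real.sqrt n := Real.sqrt_pos.2 hnR
  rw [hC, mul_one_div, le_div_iff₀ hsn]
  by_cases hn5 : n ≤ 4
  · interval_cases n
    · rw [Zseq_one]
      have := sqle (a := 1) (b := 3/4) (u := 1) (v := 2) (by norm_num) (by norm_num) (by norm_num)
      simpa using this
    · rw [Zseq_two]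
      have := sqle (a := 3/4) (b := 3/4) (u := 2) (v := 2) (by norm_num) (by norm_num) (by norm_num)
      simpa using this
    · rw [Zseq_three]
      have := sqle (a := 7/12) (b := 3/4) (u := 3) (v := 2) (by norm_num) (by norm_num) (by norm_num)
      simpa using this
    · rw [Zseq_four]
      have := sqle (a := 47/96) (b := 3/4) (u := 4) (v := 2) (by norm_num) (by norm_num) (by norm_num)
      simpa using this
  · obtain ⟨k, rfl⟩ : ∃ k, n = k + 5 := ⟨n - 5, by omega⟩
    have h1 := A5 k
    have h2 : Zseq (k + 5) * Real.sqrt ((k + 5 : ℕ) : ℝ)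
        ≤ Zseq (k + 5) * Real.sqrt ((k : ℝ) + 6) := by
      apply mul_le_mul_of_nonneg_left _ (Zseq_nonneg _)
      apply Real.sqrt_le_sqrt
      push_cast; linarith
    have h3 : Zseq 5 * Real.sqrt 6 ≤ 3 / 4 * Real.sqrt 2 := by
      rw [Zseq_five]
      exact sqle (by norm_num) (by norm_num) (by norm_num)
    linarith
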